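/- arXiv:1307.1562 — 6 statements merged into one kernel-verified Lean document; each statement's English description precedes it below -/
import Mathlib

section
/- For each integer t ≥ 1, let H_t be the graph obtained from 2t+1 pairwise disjoint triangles T_1,…,T_{2t+1} and one additional vertex v by joining v by an edge to exactly one vertex of each triangle. Then the flow spectrum of H_t is S(H_t) = {3 + 2/t} and the integer flow spectrum is S̄(H_t) = {5}. Moreover, for a signature σ making (H_t,σ) flow-admissible, H_t admits an integer nowhere-zero 5-flow φ with φ(e) ∈ {1,2,4} for every edge e, and a nowhere-zero (3 + 2/t)-flow φ_c with φ_c(e) ∈ {1, 1+1/t, 2, 2+2/t} for every edge e. -/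
/-!
Flow conservation at the two degree-2 vertices of a triangle `T_i` carries the value of the
triangle edge at the foot of the bridge around the triangle; at the foot this leaves the bridge
with `(σ(T_i) - 1)` times that value up to sign. So every triangle is unbalanced and every bridge
carries twice a value of absolute value `≥ 1`. At `v` the `2t+1` bridge values sum to zero, so
one sign class has `≥ t+1` members and the other `≤ t`, whence some bridge carries at least
`2(t+1)/t`: `F_c ≥ 3 + 2/t`. An integer `4`-flow would put `±2` on every bridge, and an odd number
of `±2`s cannot sum to zero. Conversely, when every triangle is unbalanced the half-edge signs can
be propagated around each triangle so that any constant `g_i` on `T_i` with `2g_i` on its bridge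
is conserved inside the triangle, and `g_i ∈ {1, 1 + 1/t}` (resp. `{1, 2}`) with suitable signs
balances `v`.
-/

open Finset

/-- A finite loopless multigraph with vertex type `V` and edge type `E`;
`ends e` is the unordered pair of the two distinct endpoints of the edge `e`. -/
structure Multigraph (V E : Type) where
  ends : E → Sym2 V
  not_loop : ∀ e, ¬ (ends e).IsDiag

namespace Multigraph

variable {V E : Type} [Fintype V] [Fintype E] [DecidableEq V] [DecidableEq E]

/-- The edge `e` is incident with the vertex `v`. -/
def Inc (G : Multigraph V E) (v : V) (e : E) : Prop := v ∈ G.ends e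

instance (G : Multigraph V E) (v : V) (e : E) : Decidable (G.Inc v e) :=
  inferInstanceAs (Decidable (v ∈ G.ends e))

/-- The set of edges incident with `v`. -/
def incEdges (G : Multigraph V E) (v : V) : Finset E :=
  Finset.univ.filter fun e => G.Inc v e

/-- The degree of a vertex. -/
def degree (G : Multigraph V E) (v : V) : ℕ := (G.incEdges v).card

/-- `G` is `k`-regular. -/
def IsRegular (G : Multigraph V E) (k : ℕ) : Prop := ∀ v, G.degree v = k

/-- The set `N_σ` of negative edges of a signature `σ : E → ℤˣ`. -/
def negEdges (G : Multigraph V E) (σ : E → ℤˣ) : Finset E :=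
  Finset.univ.filter fun e => σ e = -1

/-- `τ` assigns a sign to every half-edge (i.e. to each edge at each of its endpoints);
it is an orientation of the signed graph `(G, σ)` if for every edge `e = uv` the two
half-edge signs multiply to `-σ e`. -/
def IsOrientation (G : Multigraph V E) (σ : E → ℤˣ) (τ : E → V → ℤˣ) : Prop :=
  ∀ e u v, G.ends e = s(u, v) → τ e u * τ e v = - σ e

/-- The boundary `δf(v) = ∑_{h at v} τ(h) f(e_h)` of `f` at `v`. -/
def boundary {R : Type} [CommRing R] (G : Multigraph V E) (τ : E → V → ℤˣ)
    (f : E → R) (v : V) : R :=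
  ∑ e ∈ G.incEdges v, (((τ e v : ℤˣ) : ℤ) : R) * f e

/-- `f` is a nowhere-zero `r`-flow on the signed graph `(G, σ)`:
for some orientation all boundaries vanish and `1 ≤ |f e| ≤ r - 1` for every edge. -/
def IsNZFlow (G : Multigraph V E) (σ : E → ℤˣ) (r : ℝ) (f : E → ℝ) : Prop :=
  ∃ τ, G.IsOrientation σ τ ∧ (∀ v, G.boundary τ f v = 0) ∧
    ∀ e, 1 ≤ |f e| ∧ |f e| ≤ r - 1

/-- `(G, σ)` admits a nowhere-zero `r`-flow. -/
def HasNZFlow (G : Multigraph V E) (σ : E → ℤˣ) (r : ℝ) : Prop :=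
  ∃ f, G.IsNZFlow σ r f

/-- `f` is a modular nowhere-zero `r`-flow on `(G, σ)`: for some orientation all
boundaries are `≡ 0 (mod r)` and `1 ≤ |f e| ≤ r - 1` for every edge. -/
def IsModularNZFlow (G : Multigraph V E) (σ : E → ℤˣ) (r : ℝ) (f : E → ℝ) : Prop :=
  ∃ τ, G.IsOrientation σ τ ∧ (∀ v, ∃ k : ℤ, G.boundary τ f v = k * r) ∧
    ∀ e, 1 ≤ |f e| ∧ |f e| ≤ r - 1

/-- `f` is an integer-valued nowhere-zero `n`-flow on `(G, σ)`. -/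
def IsIntNZFlow (G : Multigraph V E) (σ : E → ℤˣ) (n : ℕ) (f : E → ℤ) : Prop :=
  ∃ τ, G.IsOrientation σ τ ∧ (∀ v, G.boundary τ f v = 0) ∧
    ∀ e, 1 ≤ |f e| ∧ |f e| ≤ (n : ℤ) - 1

/-- `(G, σ)` admits an integer nowhere-zero `n`-flow. -/
def HasIntNZFlow (G : Multigraph V E) (σ : E → ℤˣ) (n : ℕ) : Prop :=
  ∃ f, G.IsIntNZFlow σ n f

/-- `(G, σ)` is flow-admissible: it has a nowhere-zero `r`-flow for some `r ≥ 2`. -/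
def FlowAdmissible (G : Multigraph V E) (σ : E → ℤˣ) : Prop :=
  ∃ r : ℝ, 2 ≤ r ∧ G.HasNZFlow σ r

/-- The circular flow number `F_c(G, σ)` (the least `r` admitting a nowhere-zero `r`-flow). -/
noncomputable def Fc (G : Multigraph V E) (σ : E → ℤˣ) : ℝ :=
  sInf {r : ℝ | 2 ≤ r ∧ G.HasNZFlow σ r}

/-- The integer flow number `F(G, σ)` (the least `n` admitting an integer
nowhere-zero `n`-flow). -/
noncomputable def Fi (G : Multigraph V E) (σ : E → ℤˣ) : ℕ :=
  sInf {n : ℕ | G.HasIntNZFlow σ n}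

/-- The flow spectrum `S(G)` of `G`. -/
def Spectrum (G : Multigraph V E) : Set ℝ :=
  {r | ∃ σ : E → ℤˣ, G.FlowAdmissible σ ∧ G.Fc σ = r}

/-- The integer flow spectrum `S̄(G)` of `G`. -/
def IntSpectrum (G : Multigraph V E) : Set ℕ :=
  {n | ∃ σ : E → ℤˣ, G.FlowAdmissible σ ∧ G.Fi σ = n}

/-- `F` is the edge set of a spanning `t`-regular subgraph (a `t`-factor) of `G`. -/
def IsFactor (G : Multigraph V E) (t : ℕ) (F : Finset E) : Prop :=
  ∀ v, (G.incEdges v ∩ F).card = t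

/-- `G` has a `t`-factor. -/
def HasFactor (G : Multigraph V E) (t : ℕ) : Prop := ∃ F, G.IsFactor t F

/-- `G - X` is bipartite. -/
def BipartiteOff (G : Multigraph V E) (X : Finset E) : Prop :=
  ∃ c : V → Bool, ∀ e ∉ X, ∀ u v, G.ends e = s(u, v) → c u ≠ c v

/-- `G` is bipartite. -/
def Bipartite (G : Multigraph V E) : Prop := G.BipartiteOff ∅

/-- `X` is an `r`-minimal set: some signature `σ` with `N_σ = X` has circular flow
number `r`, while no signature whose negative edge set is a proper subset of `X`
has circular flow number `r`. -/
def IsRMinimal (G : Multigraph V E) (r : ℝ) (X : Finset E) : Prop :=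
  (∃ σ, G.negEdges σ = X ∧ G.FlowAdmissible σ ∧ G.Fc σ = r) ∧
  ∀ σ, G.negEdges σ ⊂ X → ¬ (G.FlowAdmissible σ ∧ G.Fc σ = r)

/-- `X` is an `r`-minimal set of minimum cardinality. -/
def IsSmallestRMinimal (G : Multigraph V E) (r : ℝ) (X : Finset E) : Prop :=
  G.IsRMinimal r X ∧ ∀ Y, G.IsRMinimal r Y → X.card ≤ Y.card

end Multigraph

open Multigraph

/-- The graph `H_t`: `2t+1` disjoint triangles `T_1, …, T_{2t+1}` together with one
additional vertex `v` (here `none`) joined by an edge to exactly one vertex of each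
triangle.  Triangle `i` has vertices `some (i, j)` (`j : Fin 3`) and edges
`Sum.inl (i, j)` joining `some (i, j)` and `some (i, j+1)`; the bridge `Sum.inr i`
joins `none` to `some (i, 0)`. -/
def Htri (t : ℕ) :
    Multigraph (Option (Fin (2 * t + 1) × Fin 3)) ((Fin (2 * t + 1) × Fin 3) ⊕ Fin (2 * t + 1)) where
  ends := fun e =>
    match e with
    | Sum.inl (i, j) => s(some (i, j), some (i, j + 1))
    | Sum.inr i => s(none, some (i, 0))
  not_loop := by
    rintro (⟨i, j⟩ | i) h
    · rw [Sym2.mk_isDiag_iff] at h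
      simp only [Option.some.injEq, Prod.mk.injEq] at h
      have h2 := congrArg Fin.val h.2
      simp only [Fin.val_add, Fin.val_one] at h2
      have := j.isLt
      omega
    · rw [Sym2.mk_isDiag_iff] at h
      simp at h

namespace Multigraph

variable {V E : Type}

theorem IsOrientation.cast_snd {R : Type} [CommRing R] {G : Multigraph V E} {σ : E → ℤˣ}
    {τ : E → V → ℤˣ} (hτ : G.IsOrientation σ τ) {e : E} {u v : V} (huv : G.ends e = s(u, v)) :
    ((τ e v : ℤ) : R) = -((σ e : ℤ) : R) * ((τ e u : ℤ) : R) := by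
  have hv : τ e v = -σ e * τ e u := by
    rw [← hτ e u v huv, mul_comm (τ e u), mul_assoc, Int.units_mul_self, mul_one]
  rw [hv]
  push_cast
  ring

theorem mem_incEdges [Fintype E] [DecidableEq V] (G : Multigraph V E) {v : V} {e : E} :
    e ∈ G.incEdges v ↔ v ∈ G.ends e := by
  rw [incEdges, mem_filter]
  exact and_iff_right (mem_univ e)

def tailOrientation [DecidableEq V] (tail : E → V) (σ α : E → ℤˣ) : E → V → ℤˣ :=
  fun e v => if v = tail e then α e else -σ e * α e

theorem isOrientation_tailOrientation [DecidableEq V] (G : Multigraph V E) {tail : E → V}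
    (htail : ∀ e, tail e ∈ G.ends e) (σ α : E → ℤˣ) :
    G.IsOrientation σ (tailOrientation tail σ α) := by
  intro e u v huv
  have hne : u ≠ v := fun h => G.not_loop e (by rw [huv, Sym2.mk_isDiag_iff]; exact h)
  have hsq : α e * (-σ e * α e) = -σ e := by
    rw [mul_left_comm, Int.units_mul_self, mul_one]
  have htail' := htail e
  rw [huv, Sym2.mem_iff] at htail'
  rcases htail' with h | h
  · simp only [tailOrientation, h, if_pos, if_neg hne.symm]
    exact hsq
  · simp only [tailOrientation, h, if_pos, if_neg hne]
    rw [mul_comm]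
    exact hsq

theorem spectrum_eq_singleton [Fintype V] [Fintype E] [DecidableEq V] [DecidableEq E]
    {G : Multigraph V E} {r : ℝ} (hne : ∃ σ, G.FlowAdmissible σ)
    (h : ∀ σ, G.FlowAdmissible σ → G.Fc σ = r) : G.Spectrum = {r} := by
  ext x
  constructor
  · rintro ⟨σ, hσ, rfl⟩
    exact h σ hσ
  · rintro rfl
    obtain ⟨σ, hσ⟩ := hne
    exact ⟨σ, hσ, h σ hσ⟩

theorem intSpectrum_eq_singleton [Fintype V] [Fintype E] [DecidableEq V] [DecidableEq E]
    {G : Multigraph V E} {n : ℕ} (hne : ∃ σ, G.FlowAdmissible σ)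
    (h : ∀ σ, G.FlowAdmissible σ → G.Fi σ = n) : G.IntSpectrum = {n} := by
  ext x
  constructor
  · rintro ⟨σ, hσ, rfl⟩
    exact h σ hσ
  · rintro rfl
    obtain ⟨σ, hσ⟩ := hne
    exact ⟨σ, hσ, h σ hσ⟩

end Multigraph

section SignedSums

variable {α : Type} [AddCommGroup α] [LinearOrder α] [IsOrderedAddMonoid α]
  {ι : Type} [Fintype ι]

theorem card_not_pos_nsmul_le_card_pos_nsmul {d : ι → α} {a B : α} (h0 : ∑ i, d i = 0)
    (ha : ∀ i, a ≤ |d i|) (hB : ∀ i, |d i| ≤ B) :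
    #{i | ¬ 0 < d i} • a ≤ #{i | 0 < d i} • B := by
  have hsplit : ∑ i with 0 < d i, d i = ∑ i with ¬ 0 < d i, -d i := by
    rw [sum_neg_distrib, eq_neg_iff_add_eq_zero, sum_filter_add_sum_filter_not, h0]
  calc #{i | ¬ 0 < d i} • a ≤ ∑ i with ¬ 0 < d i, -d i :=
        card_nsmul_le_sum _ _ _ fun i hi => by
          rw [← abs_of_nonpos (not_lt.1 (mem_filter.1 hi).2)]; exact ha i
    _ = ∑ i with 0 < d i, d i := hsplit.symm
    _ ≤ #{i | 0 < d i} • B := sum_le_card_nsmul _ _ _ fun i _ => (le_abs_self _).trans (hB i)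

-- One sign class has at least `t + 1` members, the other at most `t`.
theorem succ_nsmul_le_nsmul_of_sum_eq_zero {t : ℕ} (hcard : Fintype.card ι = 2 * t + 1)
    {d : ι → α} {a B : α} (ha0 : 0 ≤ a) (h0 : ∑ i, d i = 0)
    (ha : ∀ i, a ≤ |d i|) (hB : ∀ i, |d i| ≤ B) : (t + 1) • a ≤ t • B := by
  wlog hpos : #{i | 0 < d i} ≤ t generalizing d
  · refine this (d := fun i => -d i) (by rw [sum_neg_distrib, h0, neg_zero])
      (by simpa only [abs_neg] using ha) (by simpa only [abs_neg] using hB) ?_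
    have hsub : #{i | 0 < -d i} ≤ #{i | ¬ 0 < d i} :=
      card_le_card fun i hi => by
        simp only [mem_filter, mem_univ, true_and] at hi ⊢
        exact not_lt.2 (neg_pos.1 hi).le
    have := card_filter_add_card_filter_not (s := univ) (fun i => 0 < d i)
    rw [card_univ] at this
    omega
  have hB0 : 0 ≤ B := by
    obtain ⟨i⟩ : Nonempty ι := Fintype.card_pos_iff.1 (by omega)
    exact ha0.trans ((ha i).trans (hB i))
  have hneg : t + 1 ≤ #{i | ¬ 0 < d i} := by
    have := card_filter_add_card_filter_not (s := univ) (fun i => 0 < d i)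
    rw [card_univ] at this
    omega
  calc (t + 1) • a ≤ #{i | ¬ 0 < d i} • a := nsmul_le_nsmul_left ha0 hneg
    _ ≤ #{i | 0 < d i} • B := card_not_pos_nsmul_le_card_pos_nsmul h0 ha hB
    _ ≤ t • B := nsmul_le_nsmul_left hB0 hpos

end SignedSums

theorem Int.sum_ne_zero_of_abs_eq_two {ι : Type} [Fintype ι] (hodd : Odd (Fintype.card ι))
    {d : ι → ℤ} (hd : ∀ i, |d i| = 2) : ∑ i, d i ≠ 0 := by
  intro h0
  have hd4 : ∀ i, (d i : ZMod 4) = 2 := fun i => by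
    rcases abs_eq (by norm_num) |>.1 (hd i) with h | h <;> rw [h] <;> decide
  obtain ⟨k, hk⟩ := hodd
  have h4 := congrArg (Int.cast : ℤ → ZMod 4) h0
  simp only [Int.cast_sum, hd4, sum_const, card_univ, hk, Int.cast_zero, nsmul_eq_mul] at h4
  push_cast at h4
  have h2 : (2 : ZMod 4) = 0 := by
    linear_combination h4 - (k : ZMod 4) * (by decide : (4 : ZMod 4) = 0)
  exact absurd h2 (by decide)

theorem Int.cast_units_mul_self {R : Type} [Ring R] (u : ℤˣ) : ((u : ℤ) : R) * (u : ℤ) = 1 := by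
  rw [← Int.cast_mul, Int.units_coe_mul_self, Int.cast_one]

theorem Int.abs_cast_units {R : Type} [Ring R] [LinearOrder R] [IsStrictOrderedRing R] (u : ℤˣ) :
    |((u : ℤ) : R)| = 1 := by
  rw [← Int.cast_abs, Int.isUnit_iff_abs_eq.1 u.isUnit, Int.cast_one]

theorem Finset.sum_range_add_ite_lt {M : Type} [AddCommMonoid M] (m n : ℕ) (a b : M) :
    ∑ k ∈ range (m + n), (if k < m then a else b) = m • a + n • b := by
  rw [sum_range_add, sum_congr rfl fun k hk => if_pos (mem_range.1 hk)]
  simp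

namespace Htri

abbrev Vertex (t : ℕ) : Type := Option (Fin (2 * t + 1) × Fin 3)

abbrev Edge (t : ℕ) : Type := (Fin (2 * t + 1) × Fin 3) ⊕ Fin (2 * t + 1)

variable {t : ℕ}

theorem incEdges_none : (Htri t).incEdges none = univ.map Function.Embedding.inr := by
  ext (⟨i, j⟩ | i) <;> simp [Multigraph.mem_incEdges, Htri]

theorem incEdges_some_zero (i : Fin (2 * t + 1)) :
    (Htri t).incEdges (some (i, 0)) = {.inl (i, 0), .inl (i, 2), .inr i} := by
  ext (⟨i', j⟩ | i') <;> [fin_cases j; skip] <;> simp [Multigraph.mem_incEdges, Htri, eq_comm]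

theorem incEdges_some_one (i : Fin (2 * t + 1)) :
    (Htri t).incEdges (some (i, 1)) = {.inl (i, 0), .inl (i, 1)} := by
  ext (⟨i', j⟩ | i') <;> [fin_cases j; skip] <;> simp [Multigraph.mem_incEdges, Htri, eq_comm]

theorem incEdges_some_two (i : Fin (2 * t + 1)) :
    (Htri t).incEdges (some (i, 2)) = {.inl (i, 1), .inl (i, 2)} := by
  ext (⟨i', j⟩ | i') <;> [fin_cases j; skip] <;> simp [Multigraph.mem_incEdges, Htri, eq_comm]

variable {R : Type} [CommRing R] (τ : Edge t → Vertex t → ℤˣ) (f : Edge t → R)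

theorem boundary_none :
    (Htri t).boundary τ f none = ∑ i, ((τ (.inr i) none : ℤ) : R) * f (.inr i) := by
  rw [Multigraph.boundary, incEdges_none, sum_map]
  rfl

theorem boundary_some_zero (i : Fin (2 * t + 1)) :
    (Htri t).boundary τ f (some (i, 0)) =
      ((τ (.inl (i, 0)) (some (i, 0)) : ℤ) : R) * f (.inl (i, 0)) +
      ((τ (.inl (i, 2)) (some (i, 0)) : ℤ) : R) * f (.inl (i, 2)) +
      ((τ (.inr i) (some (i, 0)) : ℤ) : R) * f (.inr i) := by
  rw [Multigraph.boundary, incEdges_some_zero, sum_insert (by simp), sum_pair (by simp), add_assoc]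

theorem boundary_some_one (i : Fin (2 * t + 1)) :
    (Htri t).boundary τ f (some (i, 1)) =
      ((τ (.inl (i, 0)) (some (i, 1)) : ℤ) : R) * f (.inl (i, 0)) +
      ((τ (.inl (i, 1)) (some (i, 1)) : ℤ) : R) * f (.inl (i, 1)) := by
  rw [Multigraph.boundary, incEdges_some_one, sum_pair (by simp)]

theorem boundary_some_two (i : Fin (2 * t + 1)) :
    (Htri t).boundary τ f (some (i, 2)) =
      ((τ (.inl (i, 1)) (some (i, 2)) : ℤ) : R) * f (.inl (i, 1)) +
      ((τ (.inl (i, 2)) (some (i, 2)) : ℤ) : R) * f (.inl (i, 2)) := by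
  rw [Multigraph.boundary, incEdges_some_two, sum_pair (by simp)]

def triangleSign (σ : Edge t → ℤˣ) (i : Fin (2 * t + 1)) : ℤˣ :=
  σ (.inl (i, 0)) * σ (.inl (i, 1)) * σ (.inl (i, 2))

variable {σ : Edge t → ℤˣ} {τ f}

-- Conservation at `(i, 1)` and `(i, 2)` carries `f (i, 0)` around the triangle, picking up the
-- signs of its edges; what is left at the foot `(i, 0)` has to be balanced by the bridge.
theorem bridge_mul_eq (hτ : (Htri t).IsOrientation σ τ) (hb : ∀ v, (Htri t).boundary τ f v = 0)
    (i : Fin (2 * t + 1)) :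
    ((τ (.inr i) (some (i, 0)) : ℤ) : R) * f (.inr i) =
      (((triangleSign σ i : ℤ) : R) - 1) * ((τ (.inl (i, 0)) (some (i, 0)) : ℤ) : R) *
        f (.inl (i, 0)) := by
  have ha := boundary_some_zero τ f i ▸ hb (some (i, 0))
  have hb₁ := boundary_some_one τ f i ▸ hb (some (i, 1))
  have hc := boundary_some_two τ f i ▸ hb (some (i, 2))
  rw [hτ.cast_snd (e := .inl (i, 0)) (u := some (i, 0)) (v := some (i, 1)) rfl] at hb₁
  rw [hτ.cast_snd (e := .inl (i, 1)) (u := some (i, 1)) (v := some (i, 2)) rfl] at hc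
  rw [hτ.cast_snd (e := .inl (i, 2)) (u := some (i, 2)) (v := some (i, 0)) rfl] at ha
  simp only [triangleSign, Units.val_mul, Int.cast_mul]
  linear_combination ha + ((σ (.inl (i, 2)) : ℤ) : R) * hc +
    ((σ (.inl (i, 2)) : ℤ) : R) * ((σ (.inl (i, 1)) : ℤ) : R) * hb₁

theorem triangleSign_eq_neg_one (hτ : (Htri t).IsOrientation σ τ)
    (hb : ∀ v, (Htri t).boundary τ f v = 0) {i : Fin (2 * t + 1)} (hf : f (.inr i) ≠ 0) :
    triangleSign σ i = -1 := by
  refine (Int.units_eq_one_or _).resolve_left fun h => hf ?_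
  have hx := bridge_mul_eq hτ hb i
  rw [h, Units.val_one, Int.cast_one, sub_self, zero_mul, zero_mul] at hx
  linear_combination ((τ (.inr i) (some (i, 0)) : ℤ) : R) * hx -
    f (.inr i) * Int.cast_units_mul_self (R := R) (τ (.inr i) (some (i, 0)))

theorem abs_bridge_eq [LinearOrder R] [IsStrictOrderedRing R] (hτ : (Htri t).IsOrientation σ τ)
    (hb : ∀ v, (Htri t).boundary τ f v = 0) {i : Fin (2 * t + 1)} (hσ : triangleSign σ i = -1) :
    |f (.inr i)| = 2 * |f (.inl (i, 0))| := by
  have hx := congrArg abs (bridge_mul_eq hτ hb i)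
  rw [hσ] at hx
  norm_num [abs_mul, Int.abs_cast_units] at hx
  exact hx

def tail : Edge t → Vertex t
  | .inl p => some p
  | .inr _ => none

theorem tail_mem_ends (e : Edge t) : tail e ∈ (Htri t).ends e := by
  rcases e with p | i <;> simp [tail, Htri]

/-- Tail signs for which a constant value on triangle `i` and twice it on its bridge is conserved
inside the triangle and enters `v` with sign `s i`: going around the triangle the tail sign is
multiplied by the sign of each edge passed, and it closes up at `(i, 0)` exactly when
`triangleSign σ i = -1`. -/
def tailSign (σ : Edge t → ℤˣ) (s : Fin (2 * t + 1) → ℤˣ) : Edge t → ℤˣ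
  | .inl (i, j) => ![1, σ (.inl (i, 0)), σ (.inl (i, 0)) * σ (.inl (i, 1))] j * σ (.inr i) * s i
  | .inr i => s i

def flowOf (g : Fin (2 * t + 1) → R) : Edge t → R :=
  Sum.elim (fun p => g p.1) (fun i => 2 * g i)

theorem boundary_flowOf (hσ : ∀ i, triangleSign σ i = -1) (s : Fin (2 * t + 1) → ℤˣ)
    (g : Fin (2 * t + 1) → R) (hsum : ∑ i, ((s i : ℤ) : R) * g i = 0) (v : Vertex t) :
    (Htri t).boundary (tailOrientation tail σ (tailSign σ s)) (flowOf g) v = 0 := by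
  rcases v with _ | ⟨i, j⟩
  · rw [boundary_none]
    simp only [tailOrientation, tail, if_pos, tailSign, flowOf, Sum.elim_inr,
      mul_left_comm _ (2 : R), ← mul_sum, hsum, mul_zero]
  have hσi : ((σ (.inl (i, 0)) : ℤ) : R) * ((σ (.inl (i, 1)) : ℤ) : R) *
      ((σ (.inl (i, 2)) : ℤ) : R) = -1 := by
    simpa [triangleSign] using congrArg (fun u : ℤˣ => ((u : ℤ) : R)) (hσ i)
  obtain rfl | rfl | rfl : j = 0 ∨ j = 1 ∨ j = 2 := by fin_cases j <;> simp
  all_goals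
    first | rw [boundary_some_zero] | rw [boundary_some_one] | rw [boundary_some_two]
    simp only [tailOrientation, tail, tailSign, flowOf, Sum.elim_inl, Sum.elim_inr,
      Option.some.injEq, Prod.mk.injEq, Fin.reduceEq, one_ne_zero, and_false, reduceCtorEq,
      ↓reduceIte, Matrix.cons_val_zero, Matrix.cons_val_one, Matrix.cons_val, one_mul,
      neg_mul, Units.val_neg, Units.val_mul, Int.cast_neg, Int.cast_mul]
  · linear_combination -(((σ (.inr i) : ℤ) : R) * ((s i : ℤ) : R) * g i) * hσi
  · ring
  · ring

theorem exists_isNZFlow (ht : 1 ≤ t) (hσ : ∀ i, triangleSign σ i = -1) :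
    ∃ f, (Htri t).IsNZFlow σ (3 + 2 / (t : ℝ)) f ∧
      ∀ e, f e ∈ ({1, 1 + 1 / (t : ℝ), 2, 2 + 2 / (t : ℝ)} : Set ℝ) := by
  have ht₀ : (0 : ℝ) < 1 / t := by positivity
  have ht' : (t : ℝ) ≠ 0 := by positivity
  -- `t + 1` bridges carry `2` out of `v` and the other `t` carry `2 + 2/t` into it.
  let s : Fin (2 * t + 1) → ℤˣ := fun i => if (i : ℕ) < t + 1 then 1 else -1
  let g : Fin (2 * t + 1) → ℝ := fun i => if (i : ℕ) < t + 1 then 1 else 1 + 1 / t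
  have hsum : ∑ i, ((s i : ℤ) : ℝ) * g i = 0 := by
    calc ∑ i, ((s i : ℤ) : ℝ) * g i
        = ∑ k ∈ range ((t + 1) + t), if k < t + 1 then (1 : ℝ) else -(1 + 1 / t) := by
          rw [show t + 1 + t = 2 * t + 1 by ring, ← Fin.sum_univ_eq_sum_range]
          refine sum_congr rfl fun i _ => ?_
          simp only [s, g]
          split_ifs <;> simp
      _ = 0 := by
          rw [sum_range_add_ite_lt, nsmul_eq_mul, nsmul_eq_mul]
          push_cast
          field_simp
          ring
  have hval : ∀ e, flowOf g e ∈ ({1, 1 + 1 / (t : ℝ), 2, 2 + 2 / (t : ℝ)} : Set ℝ) := by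
    rintro (⟨i, j⟩ | i) <;> simp only [flowOf, Sum.elim_inl, Sum.elim_inr, g] <;> split_ifs <;>
      simp [mul_add, div_eq_mul_inv]
  refine ⟨flowOf g, ⟨_, isOrientation_tailOrientation _ tail_mem_ends σ _,
    boundary_flowOf hσ s g hsum, fun e => ?_⟩, hval⟩
  rcases hval e with h | h | h | h <;> rw [h, abs_of_pos (by positivity)] <;>
    constructor <;> linarith [mul_one_div 2 (t : ℝ)]

theorem exists_isIntNZFlow (ht : 1 ≤ t) (hσ : ∀ i, triangleSign σ i = -1) :
    ∃ f, (Htri t).IsIntNZFlow σ 5 f ∧ ∀ e, f e ∈ ({1, 2, 4} : Set ℤ) := by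
  -- `t + 1` bridges carry `2` out of `v`; `t - 1` carry `2` and the last one `4` into it.
  let s : Fin (2 * t + 1) → ℤˣ := fun i => if (i : ℕ) < t + 1 then 1 else -1
  let g : Fin (2 * t + 1) → ℤ := fun i => if (i : ℕ) < 2 * t then 1 else 2
  have hsum : ∑ i, ((s i : ℤ) : ℤ) * g i = 0 := by
    calc ∑ i, ((s i : ℤ) : ℤ) * g i
        = ∑ k ∈ range (2 * t + 1), if k < 2 * t then (if k < t + 1 then 1 else -1) else -2 := by
          rw [← Fin.sum_univ_eq_sum_range]
          refine sum_congr rfl fun i _ => ?_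
          simp only [s, g]
          split_ifs <;> first | omega | simp
      _ = ∑ k ∈ range ((t + 1) + (t - 1)), (if k < t + 1 then 1 else -1) - 2 := by
          rw [sum_range_succ, show t + 1 + (t - 1) = 2 * t by omega, if_neg (lt_irrefl _),
            sum_congr rfl fun k hk => if_pos (mem_range.1 hk), sub_eq_add_neg]
      _ = 0 := by
          rw [sum_range_add_ite_lt]
          simp only [nsmul_eq_mul, Nat.cast_add, Nat.cast_one, mul_one, mul_neg]
          omega
  have hval : ∀ e, flowOf g e ∈ ({1, 2, 4} : Set ℤ) := by
    rintro (⟨i, j⟩ | i) <;> simp only [flowOf, Sum.elim_inl, Sum.elim_inr, g] <;> split_ifs <;>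
      simp
  refine ⟨flowOf g, ⟨_, isOrientation_tailOrientation _ tail_mem_ends σ _,
    boundary_flowOf hσ s g hsum, fun e => ?_⟩, hval⟩
  rcases hval e with h | h | h <;> rw [h] <;> norm_num

theorem flowAdmissible_iff (ht : 1 ≤ t) :
    (Htri t).FlowAdmissible σ ↔ ∀ i, triangleSign σ i = -1 := by
  refine ⟨fun ⟨_, _, f, τ, hτ, hb, hf⟩ i =>
    triangleSign_eq_neg_one hτ hb (abs_pos.1 (one_pos.trans_le (hf _).1)), fun hσ => ?_⟩
  obtain ⟨f, hf, -⟩ := exists_isNZFlow ht hσ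
  exact ⟨_, by linarith [show (0 : ℝ) ≤ 2 / t by positivity], f, hf⟩

theorem three_add_two_div_le_of_hasNZFlow (ht : 1 ≤ t) {r : ℝ} (h : (Htri t).HasNZFlow σ r) :
    3 + 2 / (t : ℝ) ≤ r := by
  obtain ⟨f, τ, hτ, hb, hf⟩ := h
  have hσ : ∀ i, triangleSign σ i = -1 := fun i =>
    triangleSign_eq_neg_one hτ hb (abs_pos.1 (one_pos.trans_le (hf _).1))
  have key : (t + 1) • (2 : ℝ) ≤ t • (r - 1) :=
    succ_nsmul_le_nsmul_of_sum_eq_zero (Fintype.card_fin _)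
      (d := fun i => ((τ (.inr i) none : ℤ) : ℝ) * f (.inr i)) zero_le_two
      ((boundary_none τ f).symm.trans (hb none))
      (fun i => by
        rw [abs_mul, Int.abs_cast_units, one_mul, abs_bridge_eq hτ hb (hσ i)]
        linarith [(hf (.inl (i, 0))).1])
      (fun i => by rw [abs_mul, Int.abs_cast_units, one_mul]; exact (hf _).2)
  have ht₀ : (0 : ℝ) < t := by exact_mod_cast ht
  rw [nsmul_eq_mul, nsmul_eq_mul] at key
  push_cast at key
  have : 2 / (t : ℝ) ≤ r - 3 := by rw [div_le_iff₀ ht₀]; linarith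
  linarith

theorem five_le_of_hasIntNZFlow {n : ℕ} (h : (Htri t).HasIntNZFlow σ n) : 5 ≤ n := by
  obtain ⟨f, τ, hτ, hb, hf⟩ := h
  by_contra hn
  have hσ : ∀ i, triangleSign σ i = -1 := fun i =>
    triangleSign_eq_neg_one hτ hb (abs_pos.1 (one_pos.trans_le (hf _).1))
  refine Int.sum_ne_zero_of_abs_eq_two (d := fun i => (τ (.inr i) none : ℤ) * f (.inr i))
    (by simp) (fun i => ?_) ((boundary_none τ f).symm.trans (hb none))
  rw [abs_mul, Int.isUnit_iff_abs_eq.1 (Units.isUnit _), one_mul]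
  have := abs_bridge_eq hτ hb (hσ i)
  have := (hf (.inl (i, 0))).1
  have := (hf (.inr i)).2
  omega

theorem Fc_eq (ht : 1 ≤ t) (hσ : (Htri t).FlowAdmissible σ) : (Htri t).Fc σ = 3 + 2 / (t : ℝ) := by
  obtain ⟨f, hf, -⟩ := exists_isNZFlow ht ((flowAdmissible_iff ht).1 hσ)
  exact IsLeast.csInf_eq ⟨⟨by linarith [show (0 : ℝ) ≤ 2 / t by positivity], f, hf⟩,
    fun r hr => three_add_two_div_le_of_hasNZFlow ht hr.2⟩

theorem Fi_eq (ht : 1 ≤ t) (hσ : (Htri t).FlowAdmissible σ) : (Htri t).Fi σ = 5 := by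
  obtain ⟨f, hf, -⟩ := exists_isIntNZFlow ht ((flowAdmissible_iff ht).1 hσ)
  exact IsLeast.csInf_eq ⟨⟨f, hf⟩, fun n hn => five_le_of_hasIntNZFlow hn⟩

end Htri

theorem stmt0 (t : ℕ) (ht : 1 ≤ t) :
    (Htri t).Spectrum = {3 + 2 / (t : ℝ)} ∧
    (Htri t).IntSpectrum = {5} ∧
    ∀ σ, (Htri t).FlowAdmissible σ →
      (∃ f : ((Fin (2 * t + 1) × Fin 3) ⊕ Fin (2 * t + 1)) → ℤ,
        (Htri t).IsIntNZFlow σ 5 f ∧ ∀ e, f e ∈ ({1, 2, 4} : Set ℤ)) ∧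
      (∃ f : ((Fin (2 * t + 1) × Fin 3) ⊕ Fin (2 * t + 1)) → ℝ,
        (Htri t).IsNZFlow σ (3 + 2 / (t : ℝ)) f ∧
        ∀ e, f e ∈ ({1, 1 + 1 / (t : ℝ), 2, 2 + 2 / (t : ℝ)} : Set ℝ)) := by
  have hne : ∃ σ, (Htri t).FlowAdmissible σ :=
    ⟨fun _ => -1, (Htri.flowAdmissible_iff ht).2 fun _ => by simp [Htri.triangleSign]⟩
  refine ⟨spectrum_eq_singleton hne fun σ => Htri.Fc_eq ht,
    intSpectrum_eq_singleton hne fun σ => Htri.Fi_eq ht, fun σ hσ => ?_⟩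
  have hσ' := (Htri.flowAdmissible_iff ht).1 hσ
  exact ⟨Htri.exists_isIntNZFlow ht hσ', Htri.exists_isNZFlow ht hσ'⟩
end

section
/- Let t ≥ 1 be an integer and (G,σ) a signed (2t+1)-regular graph. If (G,σ) admits a modular nowhere-zero (2 + 1/t)-flow φ, then |φ(e)| ∈ {1, 1 + 1/t} for every edge e of G. -/
open Finset

open Multigraph

/-!
At a vertex `v`, the half-edge values `a_e = τ(e,v) φ(e)` of the `2t+1` incident edges satisfy
`1 ≤ |a_e| ≤ 1 + 1/t`. Rounding each `a_e` up, resp. down, to the nearest of `±1, ±(1 + 1/t)`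
gives two sums bracketing `δφ(v) = Σ a_e`. With `p` positive terms the upper one is
`p (1 + 1/t) - (2t + 1 - p) = (p - t) r` for `r = 2 + 1/t`, and the two differ by `(2t+1)/t = r`.
Since `δφ(v)` is itself a multiple of `r`, it equals one of them, which forces every `a_e` to
equal its rounded value.
-/

section Rounding

variable {ι : Type*}

theorem forall_eq_or_forall_eq_of_sum_eq_int_mul {s : Finset ι} {a lo hi : ι → ℝ} {r : ℝ}
    (hr : 0 < r) (hlo : ∀ i ∈ s, lo i ≤ a i) (hhi : ∀ i ∈ s, a i ≤ hi i)
    (hgap : ∑ i ∈ s, hi i = ∑ i ∈ s, lo i + r) {m k : ℤ} (hm : ∑ i ∈ s, lo i = m * r)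
    (hk : ∑ i ∈ s, a i = k * r) :
    (∀ i ∈ s, lo i = a i) ∨ (∀ i ∈ s, a i = hi i) := by
  have hmk : (m : ℝ) ≤ k := le_of_mul_le_mul_right (hm ▸ hk ▸ sum_le_sum hlo) hr
  have hkm : (k : ℝ) ≤ m + 1 := le_of_mul_le_mul_right
    (by rw [add_mul, one_mul, ← hm, ← hgap, ← hk]; exact sum_le_sum hhi) hr
  obtain rfl | rfl : k = m ∨ k = m + 1 := by
    have : m ≤ k := by exact_mod_cast hmk
    have : k ≤ m + 1 := by exact_mod_cast hkm
    omega
  · exact .inl ((sum_eq_sum_iff_of_le hlo).mp (hm.trans hk.symm))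
  · refine .inr ((sum_eq_sum_iff_of_le hhi).mp ?_)
    rw [hk, hgap, hm]
    push_cast
    ring

noncomputable def roundUp (δ x : ℝ) : ℝ := if 0 < x then 1 + δ else -1

theorem roundUp_sub_le {δ x : ℝ} (h₁ : 1 ≤ |x|) (h₂ : |x| ≤ 1 + δ) :
    roundUp δ x - δ ≤ x ∧ x ≤ roundUp δ x := by
  unfold roundUp
  split_ifs with hx
  · rw [abs_of_pos hx] at h₁ h₂
    constructor <;> linarith
  · rw [abs_of_nonpos (not_lt.mp hx)] at h₁ h₂
    constructor <;> linarith

theorem abs_eq_one_or_of_eq_roundUp {δ x : ℝ} (hδ : 0 ≤ δ)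
    (h : roundUp δ x - δ = x ∨ x = roundUp δ x) : |x| = 1 ∨ |x| = 1 + δ := by
  unfold roundUp at h
  split_ifs at h <;> rcases h with rfl | rfl
  · simp
  · exact .inr (abs_of_nonneg (by linarith))
  · exact .inr (by rw [abs_of_neg (by linarith)]; ring)
  · simp

theorem sum_roundUp (δ : ℝ) (s : Finset ι) (a : ι → ℝ) :
    ∑ i ∈ s, roundUp δ (a i) = #{i ∈ s | 0 < a i} * (2 + δ) - #s := by
  have hcard := card_filter_add_card_filter_not (s := s) (fun i => 0 < a i)
  simp only [roundUp, sum_ite, sum_const, nsmul_eq_mul, ← hcard, Nat.cast_add]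
  ring

theorem abs_eq_one_or_of_sum_eq_int_mul {s : Finset ι} {a : ι → ℝ} {t : ℕ} (ht : t ≠ 0)
    (hs : #s = 2 * t + 1) (ha : ∀ i ∈ s, 1 ≤ |a i| ∧ |a i| ≤ 1 + 1 / (t : ℝ)) {k : ℤ}
    (hk : ∑ i ∈ s, a i = k * (2 + 1 / (t : ℝ))) :
    ∀ i ∈ s, |a i| = 1 ∨ |a i| = 1 + 1 / (t : ℝ) := by
  set δ : ℝ := 1 / t
  have htδ : (t : ℝ) * δ = 1 := mul_one_div_cancel (by exact_mod_cast ht)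
  set p := #{i ∈ s | 0 < a i}
  have hup : ∑ i ∈ s, roundUp δ (a i) = ((p - t : ℤ) : ℝ) * (2 + δ) := by
    rw [sum_roundUp, hs]
    push_cast
    linear_combination htδ
  have hdown : ∑ i ∈ s, (roundUp δ (a i) - δ) = ((p - t - 1 : ℤ) : ℝ) * (2 + δ) := by
    rw [sum_sub_distrib, hup, sum_const, hs, nsmul_eq_mul]
    push_cast
    linear_combination (-2) * htδ
  have hround i (hi : i ∈ s) := roundUp_sub_le (ha i hi).1 (ha i hi).2
  have hδ : 0 ≤ δ := by positivity
  rcases forall_eq_or_forall_eq_of_sum_eq_int_mul (by positivity) (fun i hi => (hround i hi).1)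
    (fun i hi => (hround i hi).2) (by rw [hup, hdown]; push_cast; ring) hdown hk with h | h
  · exact fun i hi => abs_eq_one_or_of_eq_roundUp hδ (.inl (h i hi))
  · exact fun i hi => abs_eq_one_or_of_eq_roundUp hδ (.inr (h i hi))

end Rounding

theorem abs_units_intCast_mul (u : ℤˣ) (x : ℝ) : |((u : ℤ) : ℝ) * x| = |x| := by
  rcases Int.units_eq_one_or u with rfl | rfl <;> simp

theorem stmt2_general {V E : Type} [Fintype E] [DecidableEq V]
    (t : ℕ) (ht : 1 ≤ t) (G : Multigraph V E) (σ : E → ℤˣ)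
    (hreg : G.IsRegular (2 * t + 1)) (f : E → ℝ)
    (hf : G.IsModularNZFlow σ (2 + 1 / (t : ℝ)) f) :
    ∀ e, |f e| = 1 ∨ |f e| = 1 + 1 / (t : ℝ) := by
  obtain ⟨τ, -, hbd, hbound⟩ := hf
  intro e
  obtain ⟨v, hv⟩ : ∃ v, e ∈ G.incEdges v :=
    ⟨(G.ends e).out.1, mem_filter.mpr ⟨mem_univ e, Sym2.out_fst_mem _⟩⟩
  obtain ⟨k, hk⟩ := hbd v
  have hhalf (e' : E) (_ : e' ∈ G.incEdges v) :
      1 ≤ |((τ e' v : ℤ) : ℝ) * f e'| ∧ |((τ e' v : ℤ) : ℝ) * f e'| ≤ 1 + 1 / (t : ℝ) := by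
    rw [abs_units_intCast_mul]
    exact ⟨(hbound e').1, by linarith [(hbound e').2]⟩
  simpa only [abs_units_intCast_mul] using
    abs_eq_one_or_of_sum_eq_int_mul (by omega) (hreg v) hhalf hk e hv

/-- Let `t ≥ 1` and let `(G, σ)` be a signed `(2t+1)`-regular graph.  If `(G, σ)`
admits a modular nowhere-zero `(2 + 1/t)`-flow `φ`, then `|φ(e)| ∈ {1, 1 + 1/t}`
for every edge `e` of `G`. -/
theorem stmt2 {V E : Type} [Fintype V] [Fintype E] [DecidableEq V] [DecidableEq E]
    (t : ℕ) (ht : 1 ≤ t) (G : Multigraph V E) (σ : E → ℤˣ)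
    (hreg : G.IsRegular (2 * t + 1)) (f : E → ℝ)
    (hf : G.IsModularNZFlow σ (2 + 1 / (t : ℝ)) f) :
    ∀ e, |f e| = 1 ∨ |f e| = 1 + 1 / (t : ℝ) :=
  stmt2_general t ht G σ hreg f hf
end

section
/- Let t ≥ 1 be an integer and (G,σ) a flow-admissible signed (2t+1)-regular graph. If G does not have a t-factor, then F_c(G,σ) ≥ 2 + 2/(2t−1). -/
open Finset

open Multigraph


/-- Auxiliary: if `A` has `t` elements, `B` has `t+1`, all weights lie in `[1, r-1]`,
the two sums agree and `(r-2)(2t-1) < 2`, then weights on `A` exceed `r/2` and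
weights on `B` are below `r/2`. -/
lemma auxSide {E : Type} [DecidableEq E] (t : ℕ) (ht : 1 ≤ t) (r : ℝ) (hr2 : 2 ≤ r)
    (hkey : (r - 2) * (2 * (t : ℝ) - 1) < 2) (A B : Finset E) (w : E → ℝ)
    (hA : A.card = t) (hB : B.card = t + 1)
    (hwA : ∀ e ∈ A, 1 ≤ w e ∧ w e ≤ r - 1)
    (hwB : ∀ e ∈ B, 1 ≤ w e ∧ w e ≤ r - 1)
    (hsum : ∑ e ∈ A, w e = ∑ e ∈ B, w e) :
    (∀ e ∈ A, r / 2 < w e) ∧ (∀ e ∈ B, w e < r / 2) := by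
  have ht' : (1 : ℝ) ≤ (t : ℝ) := by exact_mod_cast ht
  have hS1 : (t : ℝ) + 1 ≤ ∑ e ∈ A, w e := by
    rw [hsum]
    have h := Finset.card_nsmul_le_sum B w 1 (fun e he => (hwB e he).1)
    rw [hB, nsmul_eq_mul] at h
    push_cast at h
    linarith
  have hS2 : ∑ e ∈ A, w e ≤ (t : ℝ) * (r - 1) := by
    have h := Finset.sum_le_card_nsmul A w (r - 1) (fun e he => (hwA e he).2)
    rw [hA, nsmul_eq_mul] at h
    exact h
  constructor
  · intro e he
    have hc : ((A.erase e).card : ℝ) = (t : ℝ) - 1 := by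
      rw [Finset.card_erase_of_mem he, hA]
      push_cast [ht]
      ring
    have h1 : ∑ x ∈ A.erase e, w x ≤ ((t : ℝ) - 1) * (r - 1) := by
      have h := Finset.sum_le_card_nsmul (A.erase e) w (r - 1)
        (fun x hx => (hwA x (Finset.mem_of_mem_erase hx)).2)
      rw [nsmul_eq_mul, hc] at h
      exact h
    have h2 : ∑ x ∈ A.erase e, w x + w e = ∑ x ∈ A, w x :=
      Finset.sum_erase_add A w he
    nlinarith [hS1, h1, h2, hkey, hr2, ht']
  · intro e he
    have hc : ((B.erase e).card : ℝ) = (t : ℝ) := by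
      rw [Finset.card_erase_of_mem he, hB]
      push_cast
      ring
    have h1 : (t : ℝ) * 1 ≤ ∑ x ∈ B.erase e, w x := by
      have h := Finset.card_nsmul_le_sum (B.erase e) w 1
        (fun x hx => (hwB x (Finset.mem_of_mem_erase hx)).1)
      rw [nsmul_eq_mul, hc] at h
      exact h
    have h2 : ∑ x ∈ B.erase e, w x + w e = ∑ x ∈ B, w x :=
      Finset.sum_erase_add B w he
    have h3 : ∑ x ∈ B, w x ≤ (t : ℝ) * (r - 1) := by rw [← hsum]; exact hS2
    nlinarith [h1, h2, h3, hkey, hr2, ht']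

/-- Let `t ≥ 1` and let `(G, σ)` be a flow-admissible signed `(2t+1)`-regular graph.
If `G` does not have a `t`-factor, then `F_c(G, σ) ≥ 2 + 2/(2t - 1)`. -/
theorem stmt7 {V E : Type} [Fintype V] [Fintype E] [DecidableEq V] [DecidableEq E]
    (t : ℕ) (ht : 1 ≤ t) (G : Multigraph V E) (σ : E → ℤˣ)
    (hreg : G.IsRegular (2 * t + 1)) (hadm : G.FlowAdmissible σ)
    (hnf : ¬ G.HasFactor t) :
    2 + 2 / (2 * (t : ℝ) - 1) ≤ G.Fc σ := by
  classical
  by_contra hlt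
  push_neg at hlt
  have ht' : (1 : ℝ) ≤ (t : ℝ) := by exact_mod_cast ht
  have h2t : (0 : ℝ) < 2 * (t : ℝ) - 1 := by linarith
  -- get a flow with r below the bound
  have hne : {r : ℝ | 2 ≤ r ∧ G.HasNZFlow σ r}.Nonempty := hadm
  have hbdd : BddBelow {r : ℝ | 2 ≤ r ∧ G.HasNZFlow σ r} := ⟨2, fun x hx => hx.1⟩
  obtain ⟨r, ⟨hr2, f, τ, hτ, hbf, hfe⟩, hrlt⟩ :=
    (csInf_lt_iff hbdd hne).mp hlt
  have hkey : (r - 2) * (2 * (t : ℝ) - 1) < 2 := by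
    have h1 : r - 2 < 2 / (2 * (t : ℝ) - 1) := by linarith
    calc (r - 2) * (2 * (t : ℝ) - 1) < (2 / (2 * (t : ℝ) - 1)) * (2 * (t : ℝ) - 1) := by
          exact mul_lt_mul_of_pos_right h1 h2t
      _ = 2 := by field_simp
  -- the candidate t-factor
  set F : Finset E := Finset.univ.filter (fun e => r / 2 < |f e|) with hF
  apply hnf
  refine ⟨F, fun v => ?_⟩
  -- per-vertex analysis
  set g : E → ℝ := fun e => (((τ e v : ℤˣ) : ℤ) : ℝ) * f e with hg
  have hgabs : ∀ e, |g e| = |f e| := by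
    intro e
    rcases Int.units_eq_one_or (τ e v) with h | h <;>
      simp [hg, h, abs_mul]
  set I : Finset E := G.incEdges v with hI
  have hIcard : I.card = 2 * t + 1 := hreg v
  have hsum0 : ∑ e ∈ I, g e = 0 := hbf v
  set P : Finset E := I.filter (fun e => 0 < g e) with hP
  set N : Finset E := I.filter (fun e => ¬ 0 < g e) with hN
  have hcards : P.card + N.card = 2 * t + 1 := by
    rw [hP, hN, Finset.card_filter_add_card_filter_not, hIcard]
  have hsplit : ∑ e ∈ P, g e + ∑ e ∈ N, g e = 0 := by
    rw [hP, hN, Finset.sum_filter_add_sum_filter_not, hsum0]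
  have hgP : ∀ e ∈ P, g e = |f e| := by
    intro e he
    have hpos : 0 < g e := (Finset.mem_filter.mp he).2
    rw [← hgabs e, abs_of_pos hpos]
  have hgN : ∀ e ∈ N, g e = -|f e| := by
    intro e he
    have h1 : ¬ 0 < g e := (Finset.mem_filter.mp he).2
    have h2 : g e ≠ 0 := by
      intro h0
      have := (hfe e).1
      rw [← hgabs e, h0, abs_zero] at this
      linarith
    have hneg : g e < 0 := lt_of_le_of_ne (not_lt.mp h1) h2
    rw [← hgabs e, abs_of_neg hneg]
    ring
  have hsumPN : ∑ e ∈ P, |f e| = ∑ e ∈ N, |f e| := by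
    have e1 : ∑ e ∈ P, g e = ∑ e ∈ P, |f e| := Finset.sum_congr rfl hgP
    have e2 : ∑ e ∈ N, g e = ∑ e ∈ N, (-|f e|) := Finset.sum_congr rfl hgN
    rw [e1, e2, Finset.sum_neg_distrib] at hsplit
    linarith
  have hwI : ∀ e ∈ I, 1 ≤ |f e| ∧ |f e| ≤ r - 1 := fun e _ => hfe e
  have hwP : ∀ e ∈ P, 1 ≤ |f e| ∧ |f e| ≤ r - 1 := fun e he =>
    hwI e (Finset.mem_of_mem_filter e he)
  have hwN : ∀ e ∈ N, 1 ≤ |f e| ∧ |f e| ≤ r - 1 := fun e he =>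
    hwI e (Finset.mem_of_mem_filter e he)
  -- cardinality bounds via real sums
  have hsumlb : ∀ (A : Finset E), (∀ e ∈ A, 1 ≤ |f e| ∧ |f e| ≤ r - 1) →
      (A.card : ℝ) ≤ ∑ e ∈ A, |f e| := by
    intro A hA
    have h := Finset.card_nsmul_le_sum A (fun e => |f e|) 1 (fun e he => (hA e he).1)
    rw [nsmul_eq_mul, mul_one] at h
    exact h
  have hsumub : ∀ (A : Finset E), (∀ e ∈ A, 1 ≤ |f e| ∧ |f e| ≤ r - 1) →
      ∑ e ∈ A, |f e| ≤ (A.card : ℝ) * (r - 1) := by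
    intro A hA
    have h := Finset.sum_le_card_nsmul A (fun e => |f e|) (r - 1) (fun e he => (hA e he).2)
    rw [nsmul_eq_mul] at h
    exact h
  have hPt : t ≤ P.card := by
    by_contra hcon
    push_neg at hcon
    have hPr : (P.card : ℝ) ≤ (t : ℝ) - 1 := by
      have : P.card + 1 ≤ t := hcon
      have := (Nat.cast_le (α := ℝ)).mpr this
      push_cast at this
      linarith
    have hNr : (t : ℝ) + 2 ≤ (N.card : ℝ) := by
      have : t + 2 ≤ N.card := by omega
      exact_mod_cast this
    have c1 : (N.card : ℝ) ≤ ∑ e ∈ N, |f e| := hsumlb N hwN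
    have c2 : ∑ e ∈ P, |f e| ≤ (P.card : ℝ) * (r - 1) := hsumub P hwP
    nlinarith [hkey, hr2, ht', hsumPN]
  have hNt : t ≤ N.card := by
    by_contra hcon
    push_neg at hcon
    have hNr : (N.card : ℝ) ≤ (t : ℝ) - 1 := by
      have : N.card + 1 ≤ t := hcon
      have := (Nat.cast_le (α := ℝ)).mpr this
      push_cast at this
      linarith
    have hPr : (t : ℝ) + 2 ≤ (P.card : ℝ) := by
      have : t + 2 ≤ P.card := by omega
      exact_mod_cast this
    have c1 : (P.card : ℝ) ≤ ∑ e ∈ P, |f e| := hsumlb P hwP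
    have c2 : ∑ e ∈ N, |f e| ≤ (N.card : ℝ) * (r - 1) := hsumub N hwN
    nlinarith [hkey, hr2, ht', hsumPN]
  -- identify minority side A
  have hIPN : ∀ e ∈ I, e ∈ P ∨ e ∈ N := by
    intro e he
    by_cases hcase : 0 < g e
    · exact Or.inl (Finset.mem_filter.mpr ⟨he, hcase⟩)
    · exact Or.inr (Finset.mem_filter.mpr ⟨he, hcase⟩)
  have hPI : P ⊆ I := Finset.filter_subset _ _
  have hNI : N ⊆ I := Finset.filter_subset _ _
  have hmain : ∃ A B : Finset E, A.card = t ∧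
      (∀ e ∈ A, r / 2 < |f e|) ∧ (∀ e ∈ B, |f e| < r / 2) ∧
      (∀ e ∈ I, e ∈ A ∨ e ∈ B) ∧ A ⊆ I := by
    rcases Nat.lt_or_ge P.card (t + 1) with hc | hc
    · have hPc : P.card = t := by omega
      have hNc : N.card = t + 1 := by omega
      obtain ⟨hbig, hsmall⟩ := auxSide t ht r hr2 hkey P N (fun e => |f e|)
        hPc hNc hwP hwN hsumPN
      exact ⟨P, N, hPc, hbig, hsmall, hIPN, hPI⟩
    · have hNc : N.card = t := by omega
      have hPc : P.card = t + 1 := by omega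
      obtain ⟨hbig, hsmall⟩ := auxSide t ht r hr2 hkey N P (fun e => |f e|)
        hNc hPc hwN hwP hsumPN.symm
      exact ⟨N, P, hNc, hbig, hsmall, fun e he => (hIPN e he).symm, hNI⟩
  obtain ⟨A, B, hAc, hbig, hsmall, hcover, hAI⟩ := hmain
  have : G.incEdges v ∩ F = A := by
    ext e
    simp only [Finset.mem_inter, hF, Finset.mem_filter, Finset.mem_univ, true_and]
    constructor
    · rintro ⟨heI, hef⟩
      rcases hcover e heI with h | h
      · exact h
      · exact absurd hef (not_lt.mpr (hsmall e h).le)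
    · intro he
      exact ⟨hAI he, hbig e he⟩
  rw [this, hAc]
end

section
/- Let t ≥ 1 be an integer, (G,σ) a signed (2t+1)-regular graph, r ≥ 2 a real number, and X ⊆ E(G). If (G,σ) admits a nowhere-zero r-flow, then (G_X^2, σ_X^2) admits a nowhere-zero r-flow. -/
open Finset

open Multigraph

namespace Multigraph

variable {V E : Type} [Fintype V] [Fintype E] [DecidableEq V] [DecidableEq E]

/-- The edge type of the graph `G_X^2`: two copies of the edges of `G - X`
(one for each copy `H`, `H'` of `G - X`), together with, for every edge `e = uv ∈ X`,
the two added edges `uu'` and `vv'` (indexed by the pairs `(e, w)` with `w` an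
endpoint of `e`). -/
abbrev DoubleE (G : Multigraph V E) (X : Finset E) : Type :=
  ({e : E // e ∉ X} ⊕ {e : E // e ∉ X}) ⊕ {p : E × V // p.1 ∈ X ∧ p.2 ∈ G.ends p.1}

/-- The graph `G_X^2`, built from two disjoint copies `H` and `H'` of `G - X` by
adding, for each edge `uv ∈ X`, the two edges `uu'` and `vv'`. -/
def doubleX (G : Multigraph V E) (X : Finset E) : Multigraph (V ⊕ V) (G.DoubleE X) where
  ends := fun e =>
    match e with
    | Sum.inl (Sum.inl e) => (G.ends e.1).map Sum.inl
    | Sum.inl (Sum.inr e) => (G.ends e.1).map Sum.inr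
    | Sum.inr p => s(Sum.inl p.1.2, Sum.inr p.1.2)
  not_loop := by
    rintro ((⟨e, he⟩ | ⟨e, he⟩) | ⟨⟨e, w⟩, he⟩) h
    · dsimp only at h
      obtain ⟨⟨u, v⟩, huv⟩ := Quot.exists_rep (G.ends (⟨e, he⟩ : {e : E // e ∉ X}).1)
      refine G.not_loop (⟨e, he⟩ : {e : E // e ∉ X}).1 ?_
      rw [← huv] at h ⊢
      simp only [Sym2.map_pair_eq, Sym2.mk_isDiag_iff] at h ⊢
      exact Sum.inl_injective h
    · dsimp only at h
      obtain ⟨⟨u, v⟩, huv⟩ := Quot.exists_rep (G.ends (⟨e, he⟩ : {e : E // e ∉ X}).1)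
      refine G.not_loop (⟨e, he⟩ : {e : E // e ∉ X}).1 ?_
      rw [← huv] at h ⊢
      simp only [Sym2.map_pair_eq, Sym2.mk_isDiag_iff] at h ⊢
      exact Sum.inr_injective h
    · dsimp only at h
      rw [Sym2.mk_isDiag_iff] at h
      exact Sum.inl_ne_inr h

/-- The signature `σ_X^2` of `G_X^2`: it agrees with (the restriction of) `σ` on both
copies of `G - X`, and all added edges are positive. -/
def doubleSigma (G : Multigraph V E) (X : Finset E) (σ : E → ℤˣ) : G.DoubleE X → ℤˣ :=
  fun e =>
    match e with
    | Sum.inl (Sum.inl e) => σ e.1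
    | Sum.inl (Sum.inr e) => σ e.1
    | Sum.inr _ => 1

end Multigraph

section Helpers

variable {V E : Type} [Fintype V] [Fintype E] [DecidableEq V] [DecidableEq E]

lemma sum_subtype_notmem (X : Finset E) (g : E → ℝ) :
    (∑ e : {e : E // e ∉ X}, g e.1) = ∑ e : E, if e ∉ X then g e else 0 := by
  rw [← Finset.sum_filter]
  exact (Finset.sum_subtype _ (fun x => by simp) g).symm

lemma sum_subtype_pair (G : Multigraph V E) (X : Finset E) (g : E × V → ℝ) :
    (∑ p : {p : E × V // p.1 ∈ X ∧ p.2 ∈ G.ends p.1}, g p.1)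
      = ∑ p : E × V, if p.1 ∈ X ∧ p.2 ∈ G.ends p.1 then g p else 0 := by
  rw [← Finset.sum_filter]
  exact (Finset.sum_subtype _ (fun x => by simp) g).symm

lemma pair_sum_eq (G : Multigraph V E) (X : Finset E) (v : V) (T : E → ℝ) :
    (∑ p : E × V, if p.1 ∈ X ∧ p.2 ∈ G.ends p.1 then (if v = p.2 then T p.1 else 0) else 0)
      = ∑ e : E, if e ∈ X ∧ v ∈ G.ends e then T e else 0 := by
  rw [Fintype.sum_prod_type]
  refine Finset.sum_congr rfl fun e _ => ?_
  have : ∀ w : V, (if e ∈ X ∧ w ∈ G.ends e then (if v = w then T e else 0) else 0)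
      = if v = w then (if e ∈ X ∧ v ∈ G.ends e then T e else 0) else 0 := by
    intro w
    by_cases hw : v = w
    · subst hw; simp
    · simp [hw]
  simp only [this]
  simp

lemma split_sum (X : Finset E) (P : E → Prop) [DecidablePred P] (T : E → ℝ) :
    ((∑ e : E, if e ∉ X ∧ P e then T e else 0) + ∑ e : E, if e ∈ X ∧ P e then T e else 0)
      = ∑ e : E, if P e then T e else 0 := by
  rw [← Finset.sum_add_distrib]
  refine Finset.sum_congr rfl fun e _ => ?_
  by_cases hx : e ∈ X <;> by_cases hp : P e <;> simp [hx, hp]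

end Helpers

/-- Let `t ≥ 1`, let `(G, σ)` be a signed `(2t+1)`-regular graph, let `r ≥ 2` and
`X ⊆ E(G)`.  If `(G, σ)` admits a nowhere-zero `r`-flow, then `(G_X^2, σ_X^2)`
admits a nowhere-zero `r`-flow. -/
theorem stmt8 {V E : Type} [Fintype V] [Fintype E] [DecidableEq V] [DecidableEq E]
    (t : ℕ) (ht : 1 ≤ t) (G : Multigraph V E) (σ : E → ℤˣ)
    (hreg : G.IsRegular (2 * t + 1)) (r : ℝ) (hr : 2 ≤ r) (X : Finset E)
    (h : G.HasNZFlow σ r) :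
    (G.doubleX X).HasNZFlow (G.doubleSigma X σ) r := by
  obtain ⟨f, τ, hτ, hb, hbd⟩ := h
  refine ⟨fun d => match d with
    | Sum.inl (Sum.inl e) => f e.1
    | Sum.inl (Sum.inr e) => f e.1
    | Sum.inr p => f p.1.1,
    fun d z => match d, z with
    | Sum.inl (Sum.inl e), Sum.inl v => τ e.1 v
    | Sum.inl (Sum.inl _), Sum.inr _ => 1
    | Sum.inl (Sum.inr e), Sum.inr v => -τ e.1 v
    | Sum.inl (Sum.inr _), Sum.inl _ => 1
    | Sum.inr p, Sum.inl v => τ p.1.1 v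
    | Sum.inr p, Sum.inr v => -(τ p.1.1 v), ?_, ?_, ?_⟩
  · rintro ((⟨e, he⟩ | ⟨e, he⟩) | ⟨⟨e, w⟩, hw⟩) u v huv
    · obtain ⟨⟨a, b⟩, hab⟩ := Quot.exists_rep (G.ends e)
      have hg : G.ends e = s(a, b) := hab.symm
      have hprod := hτ e a b hg
      simp only [doubleX, hg, Sym2.map_pair_eq, Sym2.eq_iff] at huv
      rcases huv with ⟨hu, hv⟩ | ⟨hu, hv⟩ <;> subst hu <;> subst hv <;>
        simpa [doubleSigma, mul_comm] using hprod
    · obtain ⟨⟨a, b⟩, hab⟩ := Quot.exists_rep (G.ends e)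
      have hg : G.ends e = s(a, b) := hab.symm
      have hprod := hτ e a b hg
      simp only [doubleX, hg, Sym2.map_pair_eq, Sym2.eq_iff] at huv
      rcases huv with ⟨hu, hv⟩ | ⟨hu, hv⟩ <;> subst hu <;> subst hv <;>
        simp only [doubleSigma, neg_mul_neg, mul_comm] <;> simpa [mul_comm] using hprod
    · simp only [doubleX, Sym2.eq_iff] at huv
      rcases huv with ⟨hu, hv⟩ | ⟨hu, hv⟩ <;> subst hu <;> subst hv <;>
        simp [doubleSigma, ← sq, Int.units_sq]
  · rintro (v | v)
    · have hbv := hb v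
      rw [Multigraph.boundary, Multigraph.incEdges, Finset.sum_filter] at hbv ⊢
      rw [Fintype.sum_sum_type, Fintype.sum_sum_type]
      simp only [Multigraph.Inc, doubleX, Sym2.mem_map, Sym2.mem_iff, Sum.inl.injEq,
        reduceCtorEq, exists_eq_right, or_false, and_false, exists_false, if_false,
        Finset.sum_const_zero, add_zero]
      rw [sum_subtype_notmem X (fun e => if v ∈ G.ends e then (((τ e v : ℤˣ) : ℤ) : ℝ) * f e else 0),
        sum_subtype_pair G X
          (fun p => if v = p.2 then (((τ p.1 v : ℤˣ) : ℤ) : ℝ) * f p.1 else 0),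
        pair_sum_eq G X v (fun e => (((τ e v : ℤˣ) : ℤ) : ℝ) * f e)]
      simp only [← ite_and]
      rw [split_sum X (fun e => v ∈ G.ends e) (fun e => (((τ e v : ℤˣ) : ℤ) : ℝ) * f e)]
      exact hbv
    · have hbv := hb v
      rw [Multigraph.boundary, Multigraph.incEdges, Finset.sum_filter] at hbv ⊢
      rw [Fintype.sum_sum_type, Fintype.sum_sum_type]
      simp only [Multigraph.Inc, doubleX, Sym2.mem_map, Sym2.mem_iff, Sum.inr.injEq,
        reduceCtorEq, exists_eq_right, false_or, and_false, exists_false, if_false,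
        Finset.sum_const_zero, zero_add, Units.val_neg, Int.cast_neg, neg_mul]
      rw [sum_subtype_notmem X
          (fun e => if v ∈ G.ends e then -((((τ e v : ℤˣ) : ℤ) : ℝ) * f e) else 0),
        sum_subtype_pair G X
          (fun p => if v = p.2 then -((((τ p.1 v : ℤˣ) : ℤ) : ℝ) * f p.1) else 0),
        pair_sum_eq G X v (fun e => -((((τ e v : ℤˣ) : ℤ) : ℝ) * f e))]
      simp only [← ite_and]
      rw [split_sum X (fun e => v ∈ G.ends e) (fun e => -((((τ e v : ℤˣ) : ℤ) : ℝ) * f e))]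
      simp only [← neg_mul, ← Int.cast_neg, ← Units.val_neg]
      rw [show (∑ e : E, if v ∈ G.ends e then (((-τ e v : ℤˣ) : ℤ) : ℝ) * f e else 0)
        = -∑ e : E, if v ∈ G.ends e then (((τ e v : ℤˣ) : ℤ) : ℝ) * f e else 0 by
          rw [← Finset.sum_neg_distrib]
          refine Finset.sum_congr rfl fun e _ => ?_
          by_cases hv : v ∈ G.ends e <;> simp [hv]]
      rw [neg_eq_zero]
      exact hbv
  · rintro ((e | e) | p) <;> exact hbd _
end

section
/- Let G be a cubic graph that does not have a 1-factor. If k is an integer with k ∈ S̄(G), then k ≥ 5. -/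
open Finset

namespace Multigraph

variable {V E : Type} [Fintype V] [Fintype E] [DecidableEq V] [DecidableEq E]

/-- `u` and `v` are joined by an edge belonging to the edge set `F`. -/
def AdjOn (G : Multigraph V E) (F : Finset E) (u v : V) : Prop :=
  ∃ e ∈ F, G.ends e = s(u, v)

/-- `u` and `v` are connected in the spanning subgraph with edge set `F`. -/
def ReachOn (G : Multigraph V E) (F : Finset E) : V → V → Prop :=
  Relation.ReflTransGen (G.AdjOn F)

/-- The connected component of `v` in the spanning subgraph with edge set `F`. -/
def componentOn (G : Multigraph V E) (F : Finset E) (v : V) : Set V :=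
  {u | G.ReachOn F v u}

/-- The number of connected components of odd cardinality of the spanning subgraph
with edge set `F`.  For a `2`-factor `F` these components are precisely the odd
circuits of the `2`-factor. -/
noncomputable def numOddComponents (G : Multigraph V E) (F : Finset E) : ℕ :=
  Nat.card {S : Set V // (∃ v, S = G.componentOn F v) ∧ Odd (Nat.card S)}

/-- The oddness `ω(G)`: the minimum number of odd circuits in a `2`-factor of `G`. -/
noncomputable def oddness (G : Multigraph V E) : ℕ :=
  sInf {k | ∃ F, G.IsFactor 2 F ∧ G.numOddComponents F = k}

/-- `e` is a bridge: its endpoints are disconnected after deleting `e`. -/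
def IsBridge (G : Multigraph V E) (e : E) : Prop :=
  ∀ u v, G.ends e = s(u, v) → ¬ G.ReachOn (Finset.univ.erase e) u v

/-- `G` has no bridge. -/
def Bridgeless (G : Multigraph V E) : Prop := ∀ e, ¬ G.IsBridge e

/-- `c` is a proper edge coloring: edges sharing an endpoint get distinct colors. -/
def IsProperEdgeColoring (G : Multigraph V E) {k : ℕ} (c : E → Fin k) : Prop :=
  ∀ e₁ e₂, e₁ ≠ e₂ → (∃ v, G.Inc v e₁ ∧ G.Inc v e₂) → c e₁ ≠ c e₂

/-- `G` is 3-edge-colorable. -/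
def ThreeEdgeColorable (G : Multigraph V E) : Prop :=
  ∃ c : E → Fin 3, G.IsProperEdgeColoring c

/-- The resistance `r(G)`: the minimum cardinality of a color class, over all proper
4-edge-colorings of `G`. -/
noncomputable def resistance (G : Multigraph V E) : ℕ :=
  sInf {k | ∃ c : E → Fin 4, G.IsProperEdgeColoring c ∧
    ∃ i : Fin 4, (Finset.univ.filter fun e => c e = i).card = k}

/-- Since our multigraphs are loopless, `G` is (isomorphic to) `K₂³` — the cubic graph
on two vertices joined by three parallel edges — iff it has exactly two vertices
and three edges. -/
def IsK23 (G : Multigraph V E) : Prop :=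
  Fintype.card V = 2 ∧ Fintype.card E = 3

/-- `S` is an independent set of vertices (no edge joins two of its members). -/
def IsIndepSet (G : Multigraph V E) (S : Finset V) : Prop :=
  ∀ u ∈ S, ∀ v ∈ S, ∀ e : E, G.ends e ≠ s(u, v)

/-- The independence number `α(G)`. -/
noncomputable def indepNum (G : Multigraph V E) : ℕ :=
  sSup {k | ∃ S : Finset V, G.IsIndepSet S ∧ S.card = k}

/-- The maximum degree `Δ(G[X])` of the subgraph of `G` induced by the edge set `X`. -/
def maxDegreeOn (G : Multigraph V E) (X : Finset E) : ℕ :=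
  Finset.univ.sup fun v => (G.incEdges v ∩ X).card

/-- A circuit of `G` of length `n + 1`: pairwise distinct vertices `v_0, …, v_n` and
pairwise distinct edges `e_0, …, e_n` with `e_i` joining `v_i` and `v_{i+1}`
(indices mod `n + 1`). -/
structure Circuit (G : Multigraph V E) where
  n : ℕ
  vert : Fin (n + 1) → V
  edge : Fin (n + 1) → E
  vert_inj : Function.Injective vert
  edge_inj : Function.Injective edge
  ends_eq : ∀ i, G.ends (edge i) = s(vert i, vert (i + 1))

/-- The number of negative edges on a circuit. -/
def Circuit.negCount {G : Multigraph V E} (σ : E → ℤˣ) (C : G.Circuit) : ℕ :=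
  (Finset.univ.filter fun i => σ (C.edge i) = -1).card

/-- The subgraph of `(G, σ)` with edge set `F` is balanced: every circuit using only
edges of `F` contains an even number of negative edges. -/
def BalancedOn (G : Multigraph V E) (σ : E → ℤˣ) (F : Finset E) : Prop :=
  ∀ C : G.Circuit, (∀ i, C.edge i ∈ F) → Even (C.negCount σ)

end Multigraph

open Multigraph

/-!
A real nowhere-zero flow lies in the kernel of the signed incidence matrix, which has integer
entries; rational points are dense in the real kernel of a rational matrix, so clearing
denominators gives an integer nowhere-zero flow, and `Fi σ` is attained.  If `Fi σ ≤ 4`, the flow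
takes values in `{±1, ±2, ±3}`; at a vertex of degree three the signed values sum to `0`, so an
even number of them are odd, and they cannot all be `±2` because three such values never sum to
`0`.  Hence every vertex meets exactly one edge of even value, and these edges form a `1`-factor.
-/

section KernelApprox

open Matrix

/-- The real kernel vector `x` is expressed in a `ℚ`-basis of the span of its entries; the
coefficient matrix `C` satisfies `A * C = 0`, and `C` applied to rational approximations of the
basis vectors gives rational kernel vectors close to `x`. -/
theorem Matrix.exists_rat_mulVec_eq_zero_cast_mem {m n : Type*} [Fintype n] (A : Matrix m n ℚ)
    {x : n → ℝ} (hx : A.map (↑) *ᵥ x = 0) {U : Set (n → ℝ)} (hU : IsOpen U) (hxU : x ∈ U) :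
    ∃ q : n → ℚ, A *ᵥ q = 0 ∧ (fun j => (q j : ℝ)) ∈ U := by
  classical
  let W := Submodule.span ℚ (Set.range x)
  have : FiniteDimensional ℚ W := FiniteDimensional.span_of_finite ℚ (Set.finite_range x)
  let b := Module.finBasis ℚ W
  let y : n → W := fun j => ⟨x j, Submodule.subset_span ⟨j, rfl⟩⟩
  let C : Matrix n (Fin (Module.finrank ℚ W)) ℚ := .of fun j i => b.repr (y j) i
  have hx_eq : x = C.map (↑) *ᵥ fun i => (b i : ℝ) := by
    funext j
    have h := congrArg Subtype.val (b.sum_repr (y j))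
    rw [Submodule.coe_sum] at h
    simp only [SetLike.val_smul, Rat.smul_def] at h
    simpa [mulVec, dotProduct, C] using h.symm
  have hAC : A * C = 0 := by
    ext v i
    have hzero : ∑ j, A v j • y j = 0 := Subtype.ext (by
      simpa [mulVec, dotProduct, y, Rat.smul_def] using congrFun hx v)
    simpa [mul_apply, C] using congrArg (fun w => b.repr w i) hzero
  have hcont : Continuous fun t => C.map ((↑) : ℚ → ℝ) *ᵥ t :=
    continuous_const.matrix_mulVec continuous_id
  obtain ⟨t, ht⟩ := (DenseRange.piMap fun _ => Rat.denseRange_cast).exists_mem_open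
    (hU.preimage hcont) ⟨_, show _ ∈ U from hx_eq ▸ hxU⟩
  refine ⟨C *ᵥ t, by rw [mulVec_mulVec, hAC, zero_mulVec], ?_⟩
  rwa [show (fun j => ((C *ᵥ t) j : ℝ)) = C.map (↑) *ᵥ fun i => (t i : ℝ) from
    funext (RingHom.map_mulVec (Rat.castHom ℝ) C t)]

theorem Matrix.exists_int_mulVec_eq_zero_forall_ne_zero {m n : Type*} [Fintype n]
    (A : Matrix m n ℤ) {x : n → ℝ} (hx : A.map (↑) *ᵥ x = 0) (hx0 : ∀ j, x j ≠ 0) :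
    ∃ z : n → ℤ, A *ᵥ z = 0 ∧ ∀ j, z j ≠ 0 := by
  have hU : IsOpen {y : n → ℝ | ∀ j, y j ≠ 0} := by
    simpa only [Set.ofPred_forall] using
      isOpen_iInter_of_finite fun j => isOpen_ne_fun (continuous_apply j) continuous_const
  obtain ⟨q, hq, hq0⟩ := (A.map ((↑) : ℤ → ℚ)).exists_rat_mulVec_eq_zero_cast_mem
    (by simpa [Matrix.map_map, Function.comp_def] using hx) hU hx0
  obtain ⟨⟨d, hd⟩, hdq⟩ := IsLocalization.exist_integer_multiples_of_finite (nonZeroDivisors ℤ) q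
  choose z hz using hdq
  refine ⟨z, ?_, fun j hj => ?_⟩
  · ext v
    have h := RingHom.map_mulVec (Int.castRingHom ℚ) A z v
    simp only [Int.coe_castRingHom, Function.comp_def] at h
    rw [show (fun j => (z j : ℚ)) = d • q from funext hz, mulVec_smul, hq] at h
    simpa using h
  · have h := hz j
    rw [hj, map_zero, eq_comm, smul_eq_zero] at h
    rcases h with rfl | h
    · exact zero_notMem_nonZeroDivisors hd
    · exact hq0 j (by simp [h])

end KernelApprox

theorem Finset.card_filter_even_eq_one {ι : Type*} {s : Finset ι} (hs : #s = 3) {g : ι → ℤ}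
    (hg : ∀ i ∈ s, 1 ≤ |g i| ∧ |g i| ≤ 3) (hsum : ∑ i ∈ s, g i = 0) :
    #(s.filter fun i => Even (g i)) = 1 := by
  classical
  obtain ⟨a, b, c, hab, hac, hbc, rfl⟩ := card_eq_three.mp hs
  have ha : a ∉ ({b, c} : Finset ι) := by simp [hab, hac]
  have hb : b ∉ ({c} : Finset ι) := by simp [hbc]
  simp only [mem_insert, mem_singleton, forall_eq_or_imp, forall_eq, abs_le, le_abs'] at hg
  rw [sum_insert ha, sum_insert hb, sum_singleton] at hsum
  rw [card_filter, sum_insert ha, sum_insert hb, sum_singleton]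
  simp only [Int.even_iff]
  split_ifs <;> omega

namespace Multigraph

open Matrix

variable {V E : Type} [Fintype E] [DecidableEq V] {G : Multigraph V E} {σ : E → ℤˣ}

def signedIncMatrix (G : Multigraph V E) (τ : E → V → ℤˣ) : Matrix V E ℤ :=
  .of fun v e => if G.Inc v e then (τ e v : ℤ) else 0

theorem boundary_eq_mulVec {R : Type} [CommRing R] (G : Multigraph V E) (τ : E → V → ℤˣ)
    (f : E → R) (v : V) :
    G.boundary τ f v = ((G.signedIncMatrix τ).map (↑) *ᵥ f) v := by
  simp [boundary, incEdges, signedIncMatrix, mulVec, dotProduct, sum_filter]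

theorem FlowAdmissible.exists_hasIntNZFlow (h : G.FlowAdmissible σ) :
    ∃ n, G.HasIntNZFlow σ n := by
  obtain ⟨r, -, f, τ, hτ, hf, hf1⟩ := h
  obtain ⟨z, hz, hz0⟩ := (G.signedIncMatrix τ).exists_int_mulVec_eq_zero_forall_ne_zero
    (x := f) (funext fun v => by rw [← boundary_eq_mulVec, hf v]; rfl)
    (fun e he => by have := (hf1 e).1; norm_num [he] at this)
  refine ⟨∑ e, (z e).natAbs + 1, z, τ, hτ, fun v => ?_, fun e => ⟨Int.one_le_abs (hz0 e), ?_⟩⟩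
  · exact (boundary_eq_mulVec G τ z v).trans (congrFun hz v)
  · have := Finset.single_le_sum (fun e _ => Nat.zero_le (z e).natAbs) (mem_univ e)
    rw [Int.abs_eq_natAbs]
    omega

theorem IsIntNZFlow.mono {n m : ℕ} {f : E → ℤ} (hf : G.IsIntNZFlow σ n f) (hnm : n ≤ m) :
    G.IsIntNZFlow σ m f := by
  obtain ⟨τ, hτ, hbd, hb⟩ := hf
  exact ⟨τ, hτ, hbd, fun e => ⟨(hb e).1, (hb e).2.trans (by omega)⟩⟩

theorem IsIntNZFlow.isFactor_one_even [DecidableEq E] {f : E → ℤ} (hG : G.IsRegular 3)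
    (hf : G.IsIntNZFlow σ 4 f) : G.IsFactor 1 (univ.filter fun e => Even (f e)) := by
  obtain ⟨τ, -, hbd, hb⟩ := hf
  intro v
  have hunit : ∀ e, |(τ e v : ℤ) * f e| = |f e| ∧ (Even ((τ e v : ℤ) * f e) ↔ Even (f e)) := by
    intro e
    rcases Int.units_eq_one_or (τ e v) with h | h <;> simp [h]
  have := card_filter_even_eq_one (hG v) (g := fun e => (τ e v : ℤ) * f e)
    (fun e _ => by simpa [(hunit e).1] using hb e) (by simpa [boundary] using hbd v)
  simpa [inter_filter, (hunit _).2] using this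

end Multigraph

theorem stmt14_general {V E : Type} [Fintype E] [DecidableEq V] [DecidableEq E]
    (G : Multigraph V E) (hcubic : G.IsRegular 3) (h1f : ¬ G.HasFactor 1)
    (k : ℕ) (hk : k ∈ G.IntSpectrum) :
    5 ≤ k := by
  obtain ⟨σ, hadm, rfl⟩ := hk
  by_contra! hlt
  obtain ⟨f, hf⟩ : G.HasIntNZFlow σ (G.Fi σ) := Nat.sInf_mem hadm.exists_hasIntNZFlow
  exact h1f ⟨_, (hf.mono (by omega)).isFactor_one_even hcubic⟩

/-- Let `G` be a cubic graph that does not have a `1`-factor.  If `k` is an integer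
with `k ∈ S̄(G)`, then `k ≥ 5`. -/
theorem stmt14 {V E : Type} [Fintype V] [Fintype E] [DecidableEq V] [DecidableEq E]
    (G : Multigraph V E) (hcubic : G.IsRegular 3) (h1f : ¬ G.HasFactor 1)
    (k : ℕ) (hk : k ∈ G.IntSpectrum) :
    5 ≤ k :=
  stmt14_general G hcubic h1f k hk
end

section
/- Let t ≥ 1 be an integer, G a (2t+1)-regular graph, and r ≥ 2 a real number. If X ⊆ E(G) is a smallest r-minimal set, then the maximum degree of the subgraph of G induced by the edge set X satisfies Δ(G[X]) ≤ t. -/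
open Finset

open Multigraph

/-!
Switching at a vertex `v` negates the signs of all edges at `v`; flows carry over by
negating the half-edge signs at `v`, so the circular flow number is unchanged, while the
negative edge set becomes `X ∆ ∂v`, with `∂v` the edges at `v`. If more than `t` of the
`2t + 1` edges at `v` lay in a smallest `r`-minimal set `X`, then `|X ∆ ∂v| < |X|`, and an
`r`-minimal subset of `X ∆ ∂v` would contradict the minimality of `|X|`.
-/

lemma Finset.card_symmDiff_lt_left {α : Type} [DecidableEq α] {s t : Finset α}
    (h : (t \ s).card < (s ∩ t).card) : (symmDiff s t).card < s.card := by
  rw [symmDiff_def, Finset.sup_eq_union, Finset.card_union_of_disjoint disjoint_sdiff_sdiff]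
  have := Finset.card_sdiff_add_card_inter s t
  omega

namespace Multigraph

variable {V E : Type}

def switchSig (G : Multigraph V E) (σ : E → ℤˣ) (μ : V → ℤˣ) : E → ℤˣ :=
  fun e => σ e * Sym2.lift ⟨fun a b => μ a * μ b, fun _ _ => mul_comm _ _⟩ (G.ends e)

lemma IsNZFlow.switchSig [Fintype E] [DecidableEq V] {G : Multigraph V E} {σ : E → ℤˣ}
    {r : ℝ} {f : E → ℝ} (h : G.IsNZFlow σ r f) (μ : V → ℤˣ) :
    G.IsNZFlow (G.switchSig σ μ) r f := by
  obtain ⟨τ, hτ, hb, hf⟩ := h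
  refine ⟨fun e x => τ e x * μ x, fun e u v he => ?_, fun v => ?_, hf⟩
  · simp only [Multigraph.switchSig, he, Sym2.lift_mk]
    rw [mul_mul_mul_comm, hτ e u v he, neg_mul]
  · have : G.boundary (fun e x => τ e x * μ x) f v =
        ((μ v : ℤ) : ℝ) * G.boundary τ f v := by
      simp only [boundary, Finset.mul_sum, Units.val_mul, Int.cast_mul]
      exact Finset.sum_congr rfl fun e _ => by ring
    rw [this, hb v, mul_zero]

@[simp]
lemma switchSig_switchSig (G : Multigraph V E) (σ : E → ℤˣ) (μ : V → ℤˣ) :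
    G.switchSig (G.switchSig σ μ) μ = σ := by
  funext e
  simp only [Multigraph.switchSig, mul_assoc, Int.units_mul_self, mul_one]

lemma hasNZFlow_switchSig_iff [Fintype E] [DecidableEq V] (G : Multigraph V E) (σ : E → ℤˣ)
    (μ : V → ℤˣ) (r : ℝ) :
    G.HasNZFlow (G.switchSig σ μ) r ↔ G.HasNZFlow σ r := by
  refine ⟨fun ⟨f, hf⟩ => ⟨f, ?_⟩, fun ⟨f, hf⟩ => ⟨f, hf.switchSig μ⟩⟩
  simpa using hf.switchSig μ

lemma flowAdmissible_switchSig_iff [Fintype E] [DecidableEq V] (G : Multigraph V E)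
    (σ : E → ℤˣ) (μ : V → ℤˣ) :
    G.FlowAdmissible (G.switchSig σ μ) ↔ G.FlowAdmissible σ := by
  simp only [FlowAdmissible, hasNZFlow_switchSig_iff]

lemma Fc_switchSig [Fintype E] [DecidableEq V] (G : Multigraph V E) (σ : E → ℤˣ)
    (μ : V → ℤˣ) :
    G.Fc (G.switchSig σ μ) = G.Fc σ := by
  simp only [Fc, hasNZFlow_switchSig_iff]

def switchAt [DecidableEq V] (v : V) : V → ℤˣ := fun x => if x = v then -1 else 1

lemma switchSig_switchAt_apply [DecidableEq V] (G : Multigraph V E) (σ : E → ℤˣ) (v : V)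
    (e : E) :
    G.switchSig σ (switchAt v) e = if G.Inc v e then -σ e else σ e := by
  obtain ⟨a, b, hab⟩ : ∃ a b, G.ends e = s(a, b) :=
    Sym2.ind (fun a b => ⟨a, b, rfl⟩) (G.ends e)
  have hne : a ≠ b := by simpa [hab] using G.not_loop e
  simp only [Multigraph.switchSig, Inc, hab, Sym2.lift_mk, Sym2.mem_iff, switchAt]
  by_cases ha : a = v <;> by_cases hb : b = v
  · exact absurd (ha.trans hb.symm) hne
  all_goals simp [ha, hb, eq_comm (a := v)]

lemma negEdges_switchSig_switchAt [Fintype E] [DecidableEq V] [DecidableEq E]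
    (G : Multigraph V E) (σ : E → ℤˣ) (v : V) :
    G.negEdges (G.switchSig σ (switchAt v)) = symmDiff (G.negEdges σ) (G.incEdges v) := by
  ext e
  simp only [negEdges, incEdges, Finset.mem_symmDiff, Finset.mem_filter, Finset.mem_univ,
    true_and, switchSig_switchAt_apply]
  rcases Int.units_eq_one_or (σ e) with h | h <;> by_cases hv : G.Inc v e <;> simp [h, hv]

lemma exists_isRMinimal_subset [Fintype E] [DecidableEq V] (G : Multigraph V E) (r : ℝ)
    (Y : Finset E) (hY : ∃ σ, G.negEdges σ = Y ∧ G.FlowAdmissible σ ∧ G.Fc σ = r) :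
    ∃ Y' ⊆ Y, G.IsRMinimal r Y' := by
  induction Y using Finset.strongInduction with
  | H Y ih =>
    by_cases hmin : ∀ σ, G.negEdges σ ⊂ Y → ¬ (G.FlowAdmissible σ ∧ G.Fc σ = r)
    · exact ⟨Y, subset_rfl, hY, hmin⟩
    push Not at hmin
    obtain ⟨σ, hsub, hσ⟩ := hmin
    obtain ⟨Y', hY', hmin'⟩ := ih _ hsub ⟨σ, rfl, hσ⟩
    exact ⟨Y', hY'.trans hsub.subset, hmin'⟩

end Multigraph

theorem stmt15_general {V E : Type} [Fintype V] [Fintype E] [DecidableEq V] [DecidableEq E]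
    (t : ℕ) (G : Multigraph V E) (hreg : G.IsRegular (2 * t + 1))
    (r : ℝ) (X : Finset E) (hX : G.IsSmallestRMinimal r X) :
    G.maxDegreeOn X ≤ t := by
  refine Finset.sup_le fun v _ => ?_
  by_contra! hv
  obtain ⟨⟨⟨σ, rfl, hadm, hFc⟩, -⟩, hsmallest⟩ := hX
  have hdeg : (G.incEdges v).card = 2 * t + 1 := hreg v
  have hlt : (symmDiff (G.negEdges σ) (G.incEdges v)).card < (G.negEdges σ).card := by
    apply Finset.card_symmDiff_lt_left
    have := Finset.card_sdiff_add_card_inter (G.incEdges v) (G.negEdges σ)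
    rw [Finset.inter_comm (G.negEdges σ)]
    omega
  obtain ⟨Y, hYsub, hYmin⟩ := G.exists_isRMinimal_subset r _
    ⟨G.switchSig σ (switchAt v), negEdges_switchSig_switchAt G σ v,
      (flowAdmissible_switchSig_iff G σ _).2 hadm, (Fc_switchSig G σ _).trans hFc⟩
  have := hsmallest Y hYmin
  have := Finset.card_le_card hYsub
  omega

/-- Let `t ≥ 1`, let `G` be a `(2t+1)`-regular graph and `r ≥ 2`.  If `X ⊆ E(G)` is a
smallest `r`-minimal set, then the maximum degree of the subgraph of `G` induced by
the edge set `X` satisfies `Δ(G[X]) ≤ t`. -/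
theorem stmt15 {V E : Type} [Fintype V] [Fintype E] [DecidableEq V] [DecidableEq E]
    (t : ℕ) (ht : 1 ≤ t) (G : Multigraph V E) (hreg : G.IsRegular (2 * t + 1))
    (r : ℝ) (hr : 2 ≤ r) (X : Finset E) (hX : G.IsSmallestRMinimal r X) :
    G.maxDegreeOn X ≤ t :=
  stmt15_general t G hreg r X hX
end
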